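/- Evolutionary stability of commitment compliance requires a budget exceeding the cost of cooperation: in the donation game (T = b, R = b − c, P = 0, S = −c with b > c > 0), for Π ∈ {Π_R, Π_P} with α = 0, any ε, and any χ ∈ [0,1), if ACD is an evolutionarily stable strategy of the noisy payoff matrix Π̃, then u > c. (If u < c then ADD strictly invades ACD; if u = c then Π̃(ADD,ACD) = Π̃(ACD,ACD) and Π̃(ACD,ADD) = Π̃(ADD,ADD), so ACD fails the ESS conditions against ADD.) -/

import Mathlib

/-- A strategy in the commitment game: whether to accept a prior commitment
(`commit = true` means "A"), the action if a commitment is formed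
(`inAct = true` means "C"), and the action if no commitment is formed
(`outAct = true` means "C"). -/
structure Strat where
  commit : Bool
  inAct : Bool
  outAct : Bool
deriving DecidableEq

def ACC : Strat := ⟨true, true, true⟩
def ACD : Strat := ⟨true, true, false⟩
def ADC : Strat := ⟨true, false, true⟩
def ADD : Strat := ⟨true, false, false⟩
def NCC : Strat := ⟨false, true, true⟩
def NCD : Strat := ⟨false, true, false⟩
def NDC : Strat := ⟨false, false, true⟩
def NDD : Strat := ⟨false, false, false⟩

/-- Row player's payoff in the one-shot Prisoner's Dilemma with payoffs
`T, R, P, S`; `true` codes cooperation. -/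
def pd (T R P S : ℝ) (myC otherC : Bool) : ℝ :=
  if myC then (if otherC then R else S) else (if otherC then T else P)

/-- The reward payoff matrix `Π_R`: the row player receives its PD payoff
(commitment formed iff both commit; then each pays `ε/2` and plays its
in-commitment action, otherwise both play their no-commitment actions),
plus `α·u` if it accepted the commitment, plus an additional `(1−α)·u`
if a commitment is formed and it cooperates in it. -/
noncomputable def payR (T R P S ε u α : ℝ) (s t : Strat) : ℝ :=
  (if s.commit ∧ t.commit then
      pd T R P S s.inAct t.inAct - ε / 2 + (if s.inAct then (1 - α) * u else 0)
   else pd T R P S s.outAct t.outAct)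
  + (if s.commit then α * u else 0)

/-- The punishment payoff matrix `Π_P`: as `Π_R` except that instead of the
reward `(1−α)·u` for compliance, the amount `(1−α)·u` is subtracted when a
commitment is formed and the row player defects in it. -/
noncomputable def payP (T R P S ε u α : ℝ) (s t : Strat) : ℝ :=
  (if s.commit ∧ t.commit then
      pd T R P S s.inAct t.inAct - ε / 2 - (if s.inAct then 0 else (1 - α) * u)
   else pd T R P S s.outAct t.outAct)
  + (if s.commit then α * u else 0)

/-- Flip the participation decision of a strategy (A ↔ N). -/
def flipPart (s : Strat) : Strat := ⟨!s.commit, s.inAct, s.outAct⟩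

/-- The noisy payoff matrix `Π̃`: with probability `χ` each player independently
errs in its decision whether to join the commitment. -/
noncomputable def noisy (χ : ℝ) (M : Strat → Strat → ℝ) (s t : Strat) : ℝ :=
  (1 - χ) ^ 2 * M s t + χ * (1 - χ) * (M (flipPart s) t + M s (flipPart t))
    + χ ^ 2 * M (flipPart s) (flipPart t)

/-- Strategy `a` is risk-dominant against strategy `b` under payoff matrix `Π`. -/
def RiskDom (M : Strat → Strat → ℝ) (a b : Strat) : Prop :=
  M a a + M a b > M b a + M b b

/-- `x` is an evolutionarily stable strategy (ESS) of the payoff matrix `Π`. -/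
def IsESS (M : Strat → Strat → ℝ) (x : Strat) : Prop :=
  ∀ y : Strat, y ≠ x → M x x > M y x ∨ (M x x = M y x ∧ M x y > M y y)

/-!
Participation noise only ever turns a formed commitment into a broken one, and outside a
commitment `ACD` and `ADD` both defect and receive the same payoffs. So every noisy payoff
difference between them is the difference inside a formed commitment, weighted by
`(1 - χ)²`: there `ADD` gains `T - R = c` by defecting and forgoes the compliance incentive `u`.
-/

section Commitment

variable {T R P S ε u α : ℝ} {M : Strat → Strat → ℝ}

def PaysPDOutsideCommitment (T R P S α u : ℝ) (M : Strat → Strat → ℝ) : Prop :=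
  ∀ s t : Strat, ¬(s.commit ∧ t.commit) →
    M s t = pd T R P S s.outAct t.outAct + if s.commit then α * u else 0

theorem paysPDOutsideCommitment_of_eq_payR_or_payP
    (hM : M = payR T R P S ε u α ∨ M = payP T R P S ε u α) :
    PaysPDOutsideCommitment T R P S α u M := by
  intro s t hst
  rcases hM with rfl | rfl <;> simp only [payR, payP, if_neg hst]

theorem defect_gain_in_commitment (hM : M = payR T R P S ε u α ∨ M = payP T R P S ε u α) :
    M ADD ACD - M ACD ACD = T - R - (1 - α) * u := by
  rcases hM with rfl | rfl <;> simp [payR, payP, pd, ADD, ACD] <;> ring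

theorem comply_gain_against_defector (hM : M = payR T R P S ε u α ∨ M = payP T R P S ε u α) :
    M ACD ADD - M ADD ADD = S - P + (1 - α) * u := by
  rcases hM with rfl | rfl <;> simp [payR, payP, pd, ADD, ACD] <;> ring

theorem noisy_sub_noisy_of_paysPDOutsideCommitment (χ : ℝ)
    (hM : PaysPDOutsideCommitment T R P S α u M) (s t s' t' : Strat)
    (hs : s.commit = true) (hs' : s'.commit = true) (ht : t.commit = true)
    (ht' : t'.commit = true) (hso : s.outAct = s'.outAct) (hto : t.outAct = t'.outAct) :
    noisy χ M s t - noisy χ M s' t' = (1 - χ) ^ 2 * (M s t - M s' t') := by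
  have flip_left : M (flipPart s) t = M (flipPart s') t' := by
    rw [hM _ _ (by simp [flipPart, hs]), hM _ _ (by simp [flipPart, hs'])]
    simp [flipPart, hs, hs', hso, hto]
  have flip_right : M s (flipPart t) = M s' (flipPart t') := by
    rw [hM _ _ (by simp [flipPart, ht]), hM _ _ (by simp [flipPart, ht'])]
    simp [flipPart, hs, hs', hso, hto]
  have flip_both : M (flipPart s) (flipPart t) = M (flipPart s') (flipPart t') := by
    rw [hM _ _ (by simp [flipPart, hs]), hM _ _ (by simp [flipPart, hs'])]
    simp [flipPart, hs, hs', hso, hto]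
  rw [noisy, noisy, flip_left, flip_right, flip_both]
  ring

end Commitment

theorem ESS_of_ACD_requires_budget_general (b c ε u χ : ℝ)
    (hχ : 0 ≤ χ ∧ χ < 1)
    (M : Strat → Strat → ℝ)
    (hM : M = payR b (b - c) 0 (-c) ε u 0 ∨ M = payP b (b - c) 0 (-c) ε u 0) :
    (IsESS (noisy χ M) ACD → u > c) ∧
    (u < c → noisy χ M ADD ACD > noisy χ M ACD ACD) ∧
    (u = c →
      noisy χ M ADD ACD = noisy χ M ACD ACD ∧
      noisy χ M ACD ADD = noisy χ M ADD ADD) := by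
  have hPD := paysPDOutsideCommitment_of_eq_payR_or_payP hM
  have hweight : 0 < (1 - χ) ^ 2 := pow_pos (sub_pos.2 hχ.2) 2
  have invade : noisy χ M ADD ACD - noisy χ M ACD ACD = (1 - χ) ^ 2 * (c - u) := by
    rw [noisy_sub_noisy_of_paysPDOutsideCommitment χ hPD ADD ACD ACD ACD
        rfl rfl rfl rfl rfl rfl,
      defect_gain_in_commitment hM]
    ring
  have resist : noisy χ M ACD ADD - noisy χ M ADD ADD = (1 - χ) ^ 2 * (u - c) := by
    rw [noisy_sub_noisy_of_paysPDOutsideCommitment χ hPD ACD ADD ADD ADD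
        rfl rfl rfl rfl rfl rfl,
      comply_gain_against_defector hM]
    ring
  refine ⟨fun hESS => ?_, fun hu => by nlinarith, fun hu => ⟨by nlinarith, by nlinarith⟩⟩
  rcases hESS ADD (by decide) with hstrict | ⟨_, hsecond⟩ <;> nlinarith

/-- **Evolutionary stability of commitment compliance requires a budget exceeding
the cost of cooperation.**
In the donation game (`T = b`, `R = b − c`, `P = 0`, `S = −c` with `b > c > 0`),
for `Π ∈ {Π_R, Π_P}` with `α = 0`, any `ε`, and any `χ ∈ [0,1)`: if ACD is an ESS
of the noisy matrix `Π̃` then `u > c`. Moreover, if `u < c` then ADD strictly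
invades ACD, and if `u = c` then `Π̃(ADD,ACD) = Π̃(ACD,ACD)` and
`Π̃(ACD,ADD) = Π̃(ADD,ADD)`, so ACD fails the ESS conditions against ADD. -/
theorem ESS_of_ACD_requires_budget (b c ε u χ : ℝ)
    (hbc : c < b) (hc : 0 < c) (hχ : 0 ≤ χ ∧ χ < 1)
    (M : Strat → Strat → ℝ)
    (hM : M = payR b (b - c) 0 (-c) ε u 0 ∨ M = payP b (b - c) 0 (-c) ε u 0) :
    (IsESS (noisy χ M) ACD → u > c) ∧
    (u < c → noisy χ M ADD ACD > noisy χ M ACD ACD) ∧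
    (u = c →
      noisy χ M ADD ACD = noisy χ M ACD ACD ∧
      noisy χ M ACD ADD = noisy χ M ADD ADD) :=
  ESS_of_ACD_requires_budget_general b c ε u χ hχ M hM
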